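/- Let μ be a finite nonnegative Borel measure on ℝ^n and let s > 1. If ν is a finite nonnegative Borel measure with ν(B) ≤ (C·μ(B))^s for all Borel sets B, then for μ-almost every x which is not an atom of μ, the Radon–Nikodym derivative dν/dμ(x) equals 0. -/

import Mathlib

/-!
By the Besicovitch differentiation theorem, for `μ`-a.e. `x` the ratios `ν (B r) / μ (B r)` over
the closed balls `B r` centred at `x` converge to `dν/dμ (x)` as `r → 0⁺`. The hypothesis bounds
these ratios by `C ^ s * μ (B r) ^ (s - 1)`, and when `x` is not an atom `μ (B r) → μ {x} = 0`;
since `s > 1`, the bound tends to `0`.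
-/

open MeasureTheory Set Filter Metric
open scoped ENNReal Topology

theorem ENNReal.div_le_mul_rpow_sub_one_of_le_mul_rpow {a b c : ℝ≥0∞} {s : ℝ} (hs : 0 < s)
    (h : a ≤ c * b ^ s) : a / b ≤ c * b ^ (s - 1) := by
  rcases eq_or_ne b 0 with rfl | hb0
  · rw [ENNReal.zero_rpow_of_pos hs, mul_zero, nonpos_iff_eq_zero] at h
    simp [h]
  rcases eq_or_ne b ∞ with rfl | hbtop
  · simp
  refine ENNReal.div_le_of_le_mul (h.trans_eq ?_)
  rw [mul_assoc, ENNReal.rpow_sub _ _ hb0 hbtop, ENNReal.rpow_one, ENNReal.div_mul_cancel hb0 hbtop]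

theorem tendsto_measure_closedBall_nhdsGT_zero {α : Type*} [MetricSpace α] [MeasurableSpace α]
    [OpensMeasurableSpace α] (μ : Measure α) [IsLocallyFiniteMeasure μ] (x : α) :
    Tendsto (fun r => μ (closedBall x r)) (𝓝[>] 0) (𝓝 (μ {x})) := by
  obtain ⟨R, hR, hfin⟩ := (μ.finiteAt_nhds x).exists_mem_basis nhds_basis_closedBall
  have := tendsto_measure_biInter_gt (μ := μ) (s := closedBall x) (a := 0)
    (fun _ _ => measurableSet_closedBall.nullMeasurableSet)
    (fun _ _ _ hij => closedBall_subset_closedBall hij) ⟨R, hR, hfin.ne⟩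
  rwa [biInter_gt_closedBall, closedBall_zero] at this

theorem rnDeriv_eq_zero_of_measure_closedBall_le_mul_rpow {β : Type*} [MetricSpace β]
    [MeasurableSpace β] [BorelSpace β] [SecondCountableTopology β] [HasBesicovitchCovering β]
    {μ ν : Measure β} [IsLocallyFiniteMeasure μ] [IsLocallyFiniteMeasure ν] {c : ℝ≥0∞}
    (hc : c ≠ ∞) {s : ℝ} (hs : 1 < s)
    (h : ∀ x r, ν (closedBall x r) ≤ c * μ (closedBall x r) ^ s) :
    ∀ᵐ x ∂μ, μ {x} = 0 → ν.rnDeriv μ x = 0 := by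
  filter_upwards [Besicovitch.ae_tendsto_rnDeriv ν μ] with x hx hatom
  have hbound : Tendsto (fun r => c * μ (closedBall x r) ^ (s - 1)) (𝓝[>] 0) (𝓝 0) :=
    (ENNReal.tendsto_const_mul_rpow_nhds_zero_of_pos hc (sub_pos.2 hs)).comp
      (hatom ▸ tendsto_measure_closedBall_nhdsGT_zero μ x)
  refine tendsto_nhds_unique hx (tendsto_of_tendsto_of_tendsto_of_le_of_le tendsto_const_nhds
    hbound (fun _ => zero_le) fun r => ?_)
  exact ENNReal.div_le_mul_rpow_sub_one_of_le_mul_rpow (by linarith) (h x r)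

theorem stmt2_general (n : ℕ) (μ ν : Measure (EuclideanSpace ℝ (Fin n)))
    [IsFiniteMeasure μ] [IsFiniteMeasure ν]
    (C s : ℝ) (hs : 1 < s)
    (h : ∀ B, MeasurableSet B → ν B ≤ (ENNReal.ofReal C * μ B) ^ s) :
    ∀ᵐ x ∂μ, μ {x} = 0 → ν.rnDeriv μ x = 0 := by
  have hs₀ : 0 ≤ s := by linarith
  refine rnDeriv_eq_zero_of_measure_closedBall_le_mul_rpow
    (ENNReal.rpow_ne_top_of_nonneg hs₀ (ENNReal.ofReal_ne_top (r := C))) hs fun x r => ?_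
  rw [← ENNReal.mul_rpow_of_nonneg _ _ hs₀]
  exact h _ measurableSet_closedBall

/-- If `ν B ≤ (C μ(B))^s` for all Borel `B` with `s > 1`, then for `μ`-a.e.
point `x` which is not an atom of `μ`, the Radon–Nikodym derivative `dν/dμ (x)` is `0`. -/
theorem stmt2 (n : ℕ) (μ ν : Measure (EuclideanSpace ℝ (Fin n)))
    [IsFiniteMeasure μ] [IsFiniteMeasure ν]
    (C s : ℝ) (hC : 0 < C) (hs : 1 < s)
    (h : ∀ B, MeasurableSet B → ν B ≤ (ENNReal.ofReal C * μ B) ^ s) :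
    ∀ᵐ x ∂μ, μ {x} = 0 → ν.rnDeriv μ x = 0 :=
  stmt2_general n μ ν C s hs h
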